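/- arXiv:1110.5692 — 2 statements merged into one kernel-verified Lean document; each statement's English description precedes it below -/
import Mathlib

section
/- Let m ≥ 1 be an integer, ω > 0, and 0 < c₁ ≤ c₂. Then there exists a constant C > 0, depending only on ω, c₁, c₂ and m, such that for every b ∈ ℂ with Re b ≥ c₁ and |b| ≤ c₂, every λ ∈ ℂ with Re λ ≥ ω, and every k ∈ ℤ ∖ {0}: |k| · |λ| · | 1/(λ + b·(k+1)^{2m}) − 1/(λ + b·k^{2m}) | ≤ C. -/
/-!
For real `t ≥ 0` put `D t = λ + b t`. Since `Re (D t) ≥ Re λ + c₁ t`, we get `c₁ t ≤ ‖D t‖` and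
`‖λ‖ ≤ ‖D t‖ + c₂ t ≤ (1 + c₂ / c₁) ‖D t‖`. The difference of inverses is
`b (t - s) / (D s · D t)` with `s = (k + 1)^{2m}`, `t = k^{2m}`, and the mean value bound
`|k| · |s - t| ≤ 2m · 2^{2m-1} · t` lets `D t` absorb `|k| · ‖b‖ · |s - t|`, while `D s` absorbs `‖λ‖`.
-/

open Complex

lemma abs_mul_abs_add_one_pow_sub_pow_le {x : ℝ} (hx : 1 ≤ |x|) (n : ℕ) :
    |x| * |(x + 1) ^ n - x ^ n| ≤ n * 2 ^ (n - 1) * |x| ^ n := by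
  obtain _ | n := n
  · simp
  have hmax : max |x + 1| |x| ≤ 2 * |x| :=
    max_le ((abs_add_le x 1).trans (by rw [abs_one]; linarith)) (by linarith [abs_nonneg x])
  have hdiff : |(x + 1) ^ (n + 1) - x ^ (n + 1)| ≤ (n + 1 : ℕ) * (2 * |x|) ^ n := by
    calc |(x + 1) ^ (n + 1) - x ^ (n + 1)| ≤ |x + 1 - x| * (n + 1 : ℕ) * max |x + 1| |x| ^ n :=
          abs_pow_sub_pow_le ..
      _ ≤ (n + 1 : ℕ) * (2 * |x|) ^ n := by
          rw [add_sub_cancel_left, abs_one, one_mul]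
          gcongr
  calc |x| * |(x + 1) ^ (n + 1) - x ^ (n + 1)| ≤ |x| * ((n + 1 : ℕ) * (2 * |x|) ^ n) := by
        gcongr
    _ = (n + 1 : ℕ) * 2 ^ (n + 1 - 1) * |x| ^ (n + 1) := by
        rw [Nat.add_sub_cancel]; ring

section ShiftedResolvent

variable {lam b : ℂ} {t c₁ c₂ : ℝ}

lemma re_add_mul_ofReal (lam b : ℂ) (t : ℝ) : (lam + b * t).re = lam.re + b.re * t := by
  simp

lemma mul_le_norm_add_mul_ofReal (hlam : 0 ≤ lam.re) (hb : c₁ ≤ b.re) (ht : 0 ≤ t) :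
    c₁ * t ≤ ‖lam + b * t‖ :=
  calc c₁ * t ≤ lam.re + b.re * t := by nlinarith
    _ = (lam + b * t).re := (re_add_mul_ofReal lam b t).symm
    _ ≤ ‖lam + b * t‖ := re_le_norm _

lemma add_mul_ofReal_ne_zero (hlam : 0 < lam.re) (hb : 0 ≤ b.re) (ht : 0 ≤ t) :
    lam + b * t ≠ 0 := by
  intro h
  have := re_add_mul_ofReal lam b t
  rw [h, zero_re] at this
  nlinarith

lemma norm_le_mul_norm_add_mul_ofReal (hlam : 0 ≤ lam.re) (hc₁ : 0 < c₁) (hb : c₁ ≤ b.re)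
    (hbc : ‖b‖ ≤ c₂) (ht : 0 ≤ t) : ‖lam‖ ≤ (1 + c₂ / c₁) * ‖lam + b * t‖ := by
  have hlow := mul_le_norm_add_mul_ofReal hlam hb ht
  have hbt : ‖b * t‖ ≤ c₂ / c₁ * ‖lam + b * t‖ := by
    rw [norm_mul, norm_real, Real.norm_of_nonneg ht, div_mul_eq_mul_div, le_div_iff₀ hc₁]
    calc ‖b‖ * t * c₁ ≤ c₂ * (c₁ * t) := by
          nlinarith [mul_le_mul_of_nonneg_right hbc (mul_nonneg hc₁.le ht)]
      _ ≤ c₂ * ‖lam + b * t‖ := by gcongr; exact (norm_nonneg b).trans hbc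
  calc ‖lam‖ = ‖(lam + b * t) - b * t‖ := by rw [add_sub_cancel_right]
    _ ≤ ‖lam + b * t‖ + ‖b * t‖ := norm_sub_le _ _
    _ ≤ (1 + c₂ / c₁) * ‖lam + b * t‖ := by linarith

lemma norm_inv_add_mul_sub_inv_add_mul {s : ℝ} (hs : lam + b * s ≠ 0) (ht : lam + b * t ≠ 0) :
    ‖(lam + b * s)⁻¹ - (lam + b * t)⁻¹‖ =
      ‖b‖ * |s - t| / (‖lam + b * s‖ * ‖lam + b * t‖) := by
  have hnum : lam + b * t - (lam + b * s) = b * ((t - s : ℝ) : ℂ) := by push_cast; ring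
  rw [inv_sub_inv hs ht, norm_div, norm_mul, hnum, norm_mul, norm_real, Real.norm_eq_abs,
    abs_sub_comm]

lemma abs_mul_norm_mul_norm_inv_sub_inv_le {x : ℝ} {n : ℕ} (hn : Even n) (hx : 1 ≤ |x|)
    (hlam : 0 < lam.re) (hc₁ : 0 < c₁) (hb : c₁ ≤ b.re) (hbc : ‖b‖ ≤ c₂) :
    |x| * ‖lam‖ * ‖(lam + b * ((x + 1) ^ n : ℝ))⁻¹ - (lam + b * (x ^ n : ℝ))⁻¹‖ ≤
      (1 + c₂ / c₁) * (c₂ * n * 2 ^ (n - 1) / c₁) := by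
  set s := (x + 1) ^ n
  set t := x ^ n
  have hs : 0 ≤ s := hn.pow_nonneg _
  have ht : 0 ≤ t := hn.pow_nonneg _
  have hb₀ : 0 ≤ b.re := hc₁.le.trans hb
  have hc₂ : 0 ≤ c₂ := (norm_nonneg b).trans hbc
  have hDs := norm_pos_iff.2 (add_mul_ofReal_ne_zero hlam hb₀ hs)
  have hDt := norm_pos_iff.2 (add_mul_ofReal_ne_zero hlam hb₀ ht)
  have hlam_ratio : ‖lam‖ / ‖lam + b * s‖ ≤ 1 + c₂ / c₁ :=
    (div_le_iff₀ hDs).2 (norm_le_mul_norm_add_mul_ofReal hlam.le hc₁ hb hbc hs)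
  have hdiff_ratio : |x| * (‖b‖ * |s - t|) / ‖lam + b * t‖ ≤ c₂ * n * 2 ^ (n - 1) / c₁ := by
    rw [div_le_div_iff₀ hDt hc₁]
    calc |x| * (‖b‖ * |s - t|) * c₁ = ‖b‖ * (|x| * |(x + 1) ^ n - x ^ n|) * c₁ := by ring
      _ ≤ c₂ * (n * 2 ^ (n - 1) * |x| ^ n) * c₁ := by
          gcongr ?_ * ?_ * _
          exact abs_mul_abs_add_one_pow_sub_pow_le hx n
      _ = c₂ * n * 2 ^ (n - 1) * (c₁ * t) := by rw [hn.pow_abs]; ring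
      _ ≤ c₂ * n * 2 ^ (n - 1) * ‖lam + b * t‖ := by
          gcongr
          exact mul_le_norm_add_mul_ofReal hlam.le hb ht
  rw [norm_inv_add_mul_sub_inv_add_mul (add_mul_ofReal_ne_zero hlam hb₀ hs)
    (add_mul_ofReal_ne_zero hlam hb₀ ht)]
  calc |x| * ‖lam‖ * (‖b‖ * |s - t| / (‖lam + b * s‖ * ‖lam + b * t‖))
      = ‖lam‖ / ‖lam + b * s‖ * (|x| * (‖b‖ * |s - t|) / ‖lam + b * t‖) := by ring
    _ ≤ (1 + c₂ / c₁) * (c₂ * n * 2 ^ (n - 1) / c₁) :=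
        mul_le_mul hlam_ratio hdiff_ratio (by positivity) (by positivity)

end ShiftedResolvent

/-- Uniform bound for the first difference of the symbol `λ/(λ + b k^{2m})`:
there is `C = C(ω, c₁, c₂, m) > 0` such that for all `b` with `Re b ≥ c₁`, `|b| ≤ c₂`,
all `λ` with `Re λ ≥ ω` and all nonzero `k ∈ ℤ`,
`|k| · |λ| · |1/(λ + b (k+1)^{2m}) − 1/(λ + b k^{2m})| ≤ C`. -/
theorem weighted_symbol_first_difference_bound
    (m : ℕ) (hm : 1 ≤ m) (ω c₁ c₂ : ℝ) (hω : 0 < ω) (hc₁ : 0 < c₁) (hc : c₁ ≤ c₂) :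
    ∃ C > (0 : ℝ), ∀ b : ℂ, c₁ ≤ b.re → ‖b‖ ≤ c₂ →
      ∀ lam : ℂ, ω ≤ lam.re → ∀ k : ℤ, k ≠ 0 →
        |(k : ℝ)| * ‖lam‖ *
          ‖(lam + b * ((k : ℂ) + 1) ^ (2 * m))⁻¹ -
            (lam + b * (k : ℂ) ^ (2 * m))⁻¹‖ ≤ C := by
  have hc₂ : 0 < c₂ := hc₁.trans_le hc
  have hm' : (0 : ℝ) < m := Nat.cast_pos.2 hm
  refine ⟨(1 + c₂ / c₁) * (c₂ * (2 * m) * 2 ^ (2 * m - 1) / c₁), by positivity, ?_⟩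
  intro b hb hbc lam hlam k hk
  have hk_abs : 1 ≤ |(k : ℝ)| := by exact_mod_cast Int.one_le_abs hk
  exact_mod_cast abs_mul_norm_mul_norm_inv_sub_inv_le (even_two_mul m) hk_abs
    (hω.trans_le hlam) hc₁ hb hbc
end

section
/- Let α ∈ (0,1), ε ∈ (0,1/2), z ∈ ℝ. Let X : ℝ → ℝ be continuously differentiable with X(x) = 0 for |x| ≥ 1. Let b : ℝ → ℂ be 2π-periodic, α-Hölder continuous, and satisfying the little-Hölder-α condition. Define b_{z,ε}(x) := Σ_{k∈ℤ} X(x − z − 2πk)·( b(z + r_ε(x − z − 2πk)) − b(z) ). Then b_{z,ε} is 2π-periodic, α-Hölder continuous, and satisfies the little-Hölder-α condition. -/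
open Real

/-- The canonical distance on `ℝ / 2πℤ`: `d_per(x,y) = inf_{k ∈ ℤ} |x - y + 2πk|`. -/
noncomputable def dper (x y : ℝ) : ℝ := ⨅ k : ℤ, |x - y + 2 * π * k|

/-- A function `f : ℝ → ℂ` is `2π`-periodic. -/
def Per (f : ℝ → ℂ) : Prop := ∀ x, f (x + 2 * π) = f x

/-- The truncation `r_ε`: `r_ε(x) = x` if `|x| ≤ ε`, `ε` if `x > ε`, `−ε` if `x < −ε`. -/
noncomputable def rtr (ε x : ℝ) : ℝ := if |x| ≤ ε then x else if ε < x then ε else -ε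

/-- The localized coefficient
`b_{z,ε}(x) = Σ_{k ∈ ℤ} X(x − z − 2πk) · (b(z + r_ε(x − z − 2πk)) − b(z))`. -/
noncomputable def bze (X : ℝ → ℝ) (b : ℝ → ℂ) (z ε x : ℝ) : ℂ :=
  ∑' k : ℤ, (X (x - z - 2 * π * k) : ℂ) * (b (z + rtr ε (x - z - 2 * π * k)) - b z)

/-- The set of (Euclidean) Hölder quotients of `g` with exponent `α`. -/
def holderSet (α : ℝ) (g : ℝ → ℂ) : Set ℝ :=
  {r | ∃ x y : ℝ, x ≠ y ∧ r = ‖g x - g y‖ / |x - y| ^ α}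

/-- `g` is α-Hölder continuous: `[g]_α < ∞`. -/
def HolderFin (α : ℝ) (g : ℝ → ℂ) : Prop := BddAbove (holderSet α g)

/-- The little-Hölder-α condition. -/
def LittleHolder (α : ℝ) (g : ℝ → ℂ) : Prop :=
  ∀ η > (0 : ℝ), ∃ δ > (0 : ℝ), ∀ x y : ℝ, 0 < |x - y| → |x - y| < δ →
    ‖g x - g y‖ / |x - y| ^ α < η

/-!
Because `X` vanishes off `(-1, 1)` and `1 < π`, at most one term of the series defining
`b_{z,ε}(x)` is nonzero, and when `|x - y| < π - 1` the same index `k` serves `x` and `y`.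
So `b_{z,ε}` is locally a translate of the single bump `F t = X t * (b (z + r_ε t) - b z)`, and
the Hölder bounds of `F` at distances `< 1` pass to `b_{z,ε}`; larger distances only need
boundedness. `F` is the product of `X`, which is Lipschitz and bounded as a compactly supported
`C¹` function, and `b (z + r_ε ·) - b z`, which inherits both Hölder conditions from `b` because
`r_ε` is `1`-Lipschitz and is bounded because `|r_ε| ≤ ε`.
-/

section Truncation

variable {ε : ℝ}

lemma rtr_eq_max_min (hε : 0 ≤ ε) (x : ℝ) : rtr ε x = max (-ε) (min x ε) := by
  unfold rtr
  split_ifs with hx hεx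
  · rw [min_eq_left (abs_le.mp hx).2, max_eq_right (abs_le.mp hx).1]
  · rw [min_eq_right hεx.le, max_eq_right (by linarith)]
  · have : x < -ε := by
      by_contra! h
      exact hx (abs_le.mpr ⟨h, not_lt.mp hεx⟩)
    rw [min_eq_left (by linarith), max_eq_left (by linarith)]

lemma lipschitzWith_rtr (hε : 0 ≤ ε) : LipschitzWith 1 (rtr ε) := by
  rw [funext (rtr_eq_max_min hε)]
  exact (LipschitzWith.id.min_const ε).const_max (-ε)

lemma abs_rtr_le (hε : 0 ≤ ε) (x : ℝ) : |rtr ε x| ≤ ε := by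
  rw [rtr_eq_max_min hε, abs_le]
  exact ⟨le_max_left _ _, max_le (by linarith) (min_le_right _ _)⟩

end Truncation

section Holder

variable {α : ℝ} {f g : ℝ → ℂ}

lemma holderFin_iff (hα : 0 < α) :
    HolderFin α g ↔ ∃ C ≥ 0, ∀ x y, ‖g x - g y‖ ≤ C * |x - y| ^ α := by
  constructor
  · rintro ⟨C, hC⟩
    refine ⟨max C 0, le_max_right _ _, fun x y => ?_⟩
    rcases eq_or_ne x y with rfl | hxy
    · simp [zero_rpow hα.ne']
    · have hpos : 0 < |x - y| ^ α := rpow_pos_of_pos (abs_sub_pos.mpr hxy) α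
      rw [← div_le_iff₀ hpos]
      exact (hC ⟨x, y, hxy, rfl⟩).trans (le_max_left _ _)
  · rintro ⟨C, hC0, hC⟩
    refine ⟨C, ?_⟩
    rintro _ ⟨x, y, hxy, rfl⟩
    exact div_le_of_le_mul₀ (by positivity) hC0 (hC x y)

lemma littleHolder_iff (hα : 0 < α) :
    LittleHolder α g ↔
      ∀ η > (0 : ℝ), ∃ δ > (0 : ℝ), ∀ x y, |x - y| < δ → ‖g x - g y‖ ≤ η * |x - y| ^ α := by
  constructor
  · intro hg η hη
    obtain ⟨δ, hδ, h⟩ := hg η hη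
    refine ⟨δ, hδ, fun x y hxy => ?_⟩
    rcases eq_or_ne x y with rfl | hne
    · simp [zero_rpow hα.ne']
    · have hd := abs_sub_pos.mpr hne
      exact ((div_lt_iff₀ (rpow_pos_of_pos hd α)).mp (h x y hd hxy)).le
  · intro hg η hη
    obtain ⟨δ, hδ, h⟩ := hg (η / 2) (half_pos hη)
    refine ⟨δ, hδ, fun x y hd hxy => ?_⟩
    have hpos := rpow_pos_of_pos hd α
    rw [div_lt_iff₀ hpos]
    linarith [h x y hxy, mul_lt_mul_of_pos_right (half_lt_self hη) hpos]

lemma HolderFin.sub_const (hg : HolderFin α g) (c : ℂ) : HolderFin α (fun x => g x - c) := by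
  simpa only [HolderFin, holderSet, sub_sub_sub_cancel_right] using hg

lemma LittleHolder.sub_const (hg : LittleHolder α g) (c : ℂ) :
    LittleHolder α (fun x => g x - c) := by
  simpa only [LittleHolder, sub_sub_sub_cancel_right] using hg

lemma abs_sub_le_of_lipschitzWith_one {φ : ℝ → ℝ} (hφ : LipschitzWith 1 φ) (x y : ℝ) :
    |φ x - φ y| ≤ |x - y| := by
  simpa [Real.dist_eq] using hφ.dist_le_mul x y

lemma HolderFin.comp_lipschitzWith (hα : 0 < α) (hg : HolderFin α g) {φ : ℝ → ℝ}
    (hφ : LipschitzWith 1 φ) : HolderFin α (g ∘ φ) := by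
  obtain ⟨C, hC0, hC⟩ := (holderFin_iff hα).mp hg
  refine (holderFin_iff hα).mpr ⟨C, hC0, fun x y => (hC _ _).trans ?_⟩
  exact mul_le_mul_of_nonneg_left
    (rpow_le_rpow (abs_nonneg _) (abs_sub_le_of_lipschitzWith_one hφ x y) hα.le) hC0

lemma LittleHolder.comp_lipschitzWith (hα : 0 < α) (hg : LittleHolder α g) {φ : ℝ → ℝ}
    (hφ : LipschitzWith 1 φ) : LittleHolder α (g ∘ φ) := by
  rw [littleHolder_iff hα] at hg ⊢
  intro η hη
  obtain ⟨δ, hδ, h⟩ := hg η hη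
  have hφxy := abs_sub_le_of_lipschitzWith_one hφ
  refine ⟨δ, hδ, fun x y hxy => (h _ _ ((hφxy x y).trans_lt hxy)).trans ?_⟩
  exact mul_le_mul_of_nonneg_left (rpow_le_rpow (abs_nonneg _) (hφxy x y) hα.le) hη.le

lemma norm_mul_sub_mul_le (a b c d : ℂ) : ‖a * b - c * d‖ ≤ ‖a‖ * ‖b - d‖ + ‖a - c‖ * ‖d‖ := by
  rw [show a * b - c * d = a * (b - d) + (a - c) * d by ring, ← norm_mul, ← norm_mul]
  exact norm_add_le _ _

variable {Mf Mg : ℝ}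

lemma HolderFin.mul (hα : 0 < α) (hf : HolderFin α f) (hg : HolderFin α g)
    (hMf : ∀ x, ‖f x‖ ≤ Mf) (hMg : ∀ x, ‖g x‖ ≤ Mg) : HolderFin α (fun x => f x * g x) := by
  obtain ⟨Cf, hCf0, hCf⟩ := (holderFin_iff hα).mp hf
  obtain ⟨Cg, hCg0, hCg⟩ := (holderFin_iff hα).mp hg
  have hMf0 : 0 ≤ Mf := (norm_nonneg _).trans (hMf 0)
  have hMg0 : 0 ≤ Mg := (norm_nonneg _).trans (hMg 0)
  refine (holderFin_iff hα).mpr ⟨Mf * Cg + Cf * Mg, by positivity, fun x y => ?_⟩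
  calc ‖f x * g x - f y * g y‖ ≤ ‖f x‖ * ‖g x - g y‖ + ‖f x - f y‖ * ‖g y‖ :=
        norm_mul_sub_mul_le _ _ _ _
    _ ≤ Mf * (Cg * |x - y| ^ α) + Cf * |x - y| ^ α * Mg := by
        gcongr
        exacts [hMf x, hCg x y, hCf x y, hMg y]
    _ = (Mf * Cg + Cf * Mg) * |x - y| ^ α := by ring

lemma LittleHolder.mul (hα : 0 < α) (hf : LittleHolder α f) (hg : LittleHolder α g)
    (hMf : ∀ x, ‖f x‖ ≤ Mf) (hMg : ∀ x, ‖g x‖ ≤ Mg) : LittleHolder α (fun x => f x * g x) := by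
  rw [littleHolder_iff hα] at hf hg ⊢
  intro η hη
  have hMf0 : 0 ≤ Mf := (norm_nonneg _).trans (hMf 0)
  have hMg0 : 0 ≤ Mg := (norm_nonneg _).trans (hMg 0)
  obtain ⟨δf, hδf, hf⟩ := hf (η / (2 * (Mg + 1))) (by positivity)
  obtain ⟨δg, hδg, hg⟩ := hg (η / (2 * (Mf + 1))) (by positivity)
  refine ⟨min δf δg, lt_min hδf hδg, fun x y hxy => ?_⟩
  calc ‖f x * g x - f y * g y‖ ≤ ‖f x‖ * ‖g x - g y‖ + ‖f x - f y‖ * ‖g y‖ :=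
        norm_mul_sub_mul_le _ _ _ _
    _ ≤ (Mf + 1) * (η / (2 * (Mf + 1)) * |x - y| ^ α)
          + η / (2 * (Mg + 1)) * |x - y| ^ α * (Mg + 1) := by
        gcongr
        exacts [(hMf x).trans (by linarith), hg x y (hxy.trans_le (min_le_right _ _)),
          hf x y (hxy.trans_le (min_le_left _ _)), (hMg y).trans (by linarith)]
    _ = η * |x - y| ^ α := by field_simp; ring

lemma holderFin_of_bounded_of_local (hα : 0 < α) (hMf : ∀ x, ‖f x‖ ≤ Mf) {C : ℝ}
    (hC : ∀ x y, |x - y| < 1 → ‖f x - f y‖ ≤ C * |x - y| ^ α) : HolderFin α f := by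
  have hMf0 : 0 ≤ Mf := (norm_nonneg _).trans (hMf 0)
  refine (holderFin_iff hα).mpr ⟨max C 0 + 2 * Mf, by positivity, fun x y => ?_⟩
  rcases lt_or_ge |x - y| 1 with hxy | hxy
  · exact (hC x y hxy).trans
      (mul_le_mul_of_nonneg_right (by linarith [le_max_left C 0]) (by positivity))
  · calc ‖f x - f y‖ ≤ Mf + Mf := (norm_sub_le _ _).trans (add_le_add (hMf x) (hMf y))
      _ ≤ (max C 0 + 2 * Mf) * |x - y| ^ α := by
          nlinarith [one_le_rpow hxy hα.le, le_max_right C 0]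

lemma LipschitzWith.holderFin {K : NNReal} (hα₀ : 0 < α) (hα₁ : α ≤ 1) (hf : LipschitzWith K f)
    (hMf : ∀ x, ‖f x‖ ≤ Mf) : HolderFin α f := by
  refine holderFin_of_bounded_of_local hα₀ hMf (C := K) fun x y hxy => ?_
  calc ‖f x - f y‖ ≤ K * |x - y| ^ (1 : ℝ) := by
        simpa [Real.norm_eq_abs] using hf.norm_sub_le x y
    _ ≤ K * |x - y| ^ α := mul_le_mul_of_nonneg_left
        (rpow_le_rpow_of_exponent_ge' (abs_nonneg _) hxy.le hα₀.le hα₁) K.coe_nonneg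

lemma LipschitzWith.littleHolder {K : NNReal} (hα₀ : 0 < α) (hα₁ : α < 1)
    (hf : LipschitzWith K f) : LittleHolder α f := by
  rw [littleHolder_iff hα₀]
  intro η hη
  have hc : 0 < η / (K + 1) := by positivity
  refine ⟨(η / (K + 1)) ^ (1 - α)⁻¹, by positivity, fun x y hxy => ?_⟩
  rcases eq_or_ne x y with rfl | hne
  · simp [zero_rpow hα₀.ne']
  have hsmall : |x - y| ^ (1 - α) ≤ η / (K + 1) := by
    calc |x - y| ^ (1 - α) ≤ ((η / (K + 1)) ^ (1 - α)⁻¹) ^ (1 - α) := by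
          gcongr
      _ = η / (K + 1) := by rw [← rpow_mul hc.le, inv_mul_cancel₀ (by linarith), rpow_one]
  calc ‖f x - f y‖ ≤ K * |x - y| := by simpa [Real.norm_eq_abs] using hf.norm_sub_le x y
    _ ≤ (K + 1) * (|x - y| ^ (1 - α) * |x - y| ^ α) := by
        rw [← rpow_add (abs_sub_pos.mpr hne), sub_add_cancel, rpow_one]
        gcongr
        linarith
    _ ≤ (K + 1) * (η / (K + 1) * |x - y| ^ α) := by gcongr
    _ = η * |x - y| ^ α := by field_simp

end Holder

lemma exists_int_forall_ne_pi_le_abs_sub (w : ℝ) :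
    ∃ k : ℤ, ∀ j : ℤ, j ≠ k → π ≤ |w - 2 * π * j| := by
  refine ⟨round (w / (2 * π)), fun j hj => ?_⟩
  have h2π : 0 < 2 * π := by positivity
  have hround := abs_sub_round (w / (2 * π))
  have hjk : (1 : ℝ) ≤ |(j : ℝ) - round (w / (2 * π))| := by
    exact_mod_cast Int.one_le_abs (sub_ne_zero.mpr hj)
  have hdist : 1 / 2 ≤ |w / (2 * π) - j| := by
    have := abs_sub_abs_le_abs_sub ((j : ℝ) - round (w / (2 * π))) (j - w / (2 * π))
    rw [abs_sub_comm (j : ℝ) (w / (2 * π)),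
      show (j : ℝ) - round (w / (2 * π)) - (j - w / (2 * π))
        = w / (2 * π) - round (w / (2 * π)) by ring] at this
    linarith
  calc π = 2 * π * (1 / 2) := by ring
    _ ≤ 2 * π * |w / (2 * π) - j| := by gcongr
    _ = |w - 2 * π * j| := by
        rw [← abs_of_pos h2π, ← abs_mul, abs_of_pos h2π, mul_sub, mul_div_cancel₀ _ h2π.ne']

noncomputable def periodize (φ : ℝ → ℂ) (z x : ℝ) : ℂ := ∑' k : ℤ, φ (x - z - 2 * π * k)

section Periodize

variable {φ : ℝ → ℂ} {z : ℝ}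

lemma per_periodize (φ : ℝ → ℂ) (z : ℝ) : Per (periodize φ z) := by
  intro x
  unfold periodize
  rw [← (Equiv.addRight (1 : ℤ)).tsum_eq]
  congr 1
  ext k
  push_cast [Equiv.coe_addRight]
  ring_nf

lemma exists_periodize_eq (hφ : ∀ t, 1 ≤ |t| → φ t = 0) {x y : ℝ} (hxy : |x - y| < π - 1) :
    ∃ s, periodize φ z x = φ s ∧ periodize φ z y = φ (s - (x - y)) := by
  obtain ⟨k, hk⟩ := exists_int_forall_ne_pi_le_abs_sub (x - z)
  refine ⟨x - z - 2 * π * k, tsum_eq_single k fun j hj => hφ _ ?_, ?_⟩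
  · linarith [hk j hj, pi_gt_three]
  · rw [show x - z - 2 * π * k - (x - y) = y - z - 2 * π * k by ring]
    refine tsum_eq_single k fun j hj => hφ _ ?_
    have := abs_sub_abs_le_abs_sub (x - z - 2 * π * j) (x - y)
    rw [show x - z - 2 * π * j - (x - y) = y - z - 2 * π * j by ring] at this
    linarith [hk j hj]

lemma norm_periodize_le (hφ : ∀ t, 1 ≤ |t| → φ t = 0) {M : ℝ} (hM : ∀ t, ‖φ t‖ ≤ M) (x : ℝ) :
    ‖periodize φ z x‖ ≤ M := by
  obtain ⟨s, hs, -⟩ := exists_periodize_eq (z := z) hφ (x := x) (y := x)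
    (by rw [sub_self, abs_zero]; linarith [pi_gt_three])
  exact hs ▸ hM s

variable {α : ℝ}

lemma HolderFin.periodize (hα : 0 < α) (hφH : HolderFin α φ) (hφ : ∀ t, 1 ≤ |t| → φ t = 0)
    {M : ℝ} (hM : ∀ t, ‖φ t‖ ≤ M) (z : ℝ) : HolderFin α (periodize φ z) := by
  obtain ⟨C, -, hC⟩ := (holderFin_iff hα).mp hφH
  refine holderFin_of_bounded_of_local hα (norm_periodize_le hφ hM) (C := C) fun x y hxy => ?_
  obtain ⟨s, hx, hy⟩ := exists_periodize_eq (z := z) hφ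
    (by linarith [pi_gt_three] : |x - y| < π - 1)
  simpa [hx, hy] using hC s (s - (x - y))

lemma LittleHolder.periodize (hα : 0 < α) (hφL : LittleHolder α φ)
    (hφ : ∀ t, 1 ≤ |t| → φ t = 0) (z : ℝ) : LittleHolder α (periodize φ z) := by
  rw [littleHolder_iff hα] at hφL ⊢
  intro η hη
  obtain ⟨δ, hδ, h⟩ := hφL η hη
  refine ⟨min δ 1, lt_min hδ one_pos, fun x y hxy => ?_⟩
  obtain ⟨s, hx, hy⟩ := exists_periodize_eq (z := z) hφ
    (by linarith [pi_gt_three, min_le_right δ 1] : |x - y| < π - 1)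
  simpa [hx, hy] using h s (s - (x - y)) (by simpa using hxy.trans_le (min_le_left _ _))

end Periodize

lemma HolderFin.exists_norm_sub_le_comp_rtr {α ε : ℝ} {b : ℝ → ℂ} (hα : 0 < α) (hε : 0 ≤ ε)
    (hb : HolderFin α b) (z : ℝ) : ∃ M, ∀ t, ‖b (z + rtr ε t) - b z‖ ≤ M := by
  obtain ⟨C, hC0, hC⟩ := (holderFin_iff hα).mp hb
  refine ⟨C * ε ^ α, fun t => (hC _ _).trans ?_⟩
  rw [add_sub_cancel_left]
  exact mul_le_mul_of_nonneg_left (rpow_le_rpow (abs_nonneg _) (abs_rtr_le hε t) hα.le) hC0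

theorem localized_coefficient_littleHolder_general
    (α ε z : ℝ) (hα : α ∈ Set.Ioo (0 : ℝ) 1) (hε : ε ∈ Set.Ioo (0 : ℝ) (1 / 2))
    (X : ℝ → ℝ) (hX : ContDiff ℝ 1 X) (hXsupp : ∀ x : ℝ, 1 ≤ |x| → X x = 0)
    (b : ℝ → ℂ) (hbH : HolderFin α b) (hbl : LittleHolder α b) :
    Per (bze X b z ε) ∧ HolderFin α (bze X b z ε) ∧ LittleHolder α (bze X b z ε) := by
  obtain ⟨hα₀, hα₁⟩ := hα
  set Xc : ℝ → ℂ := fun t => (X t : ℂ)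
  have hXc : ContDiff ℝ 1 Xc := Complex.ofRealCLM.contDiff.comp hX
  have hXc_supp : HasCompactSupport Xc :=
    HasCompactSupport.intro (isCompact_Icc (a := -1) (b := 1)) fun t ht => by
      have : 1 ≤ |t| := by
        by_contra! h
        exact ht (Set.mem_Icc.mpr (abs_le.mp h.le))
      simp [Xc, hXsupp t this]
  obtain ⟨K, hXc_lip⟩ := hXc.lipschitzWith_of_hasCompactSupport hXc_supp one_ne_zero
  obtain ⟨MX, hMX⟩ := hXc.continuous.bounded_above_of_compact_support hXc_supp
  set g : ℝ → ℂ := fun t => b (z + rtr ε t) - b z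
  have hφ : LipschitzWith 1 (fun t => z + rtr ε t) := by
    simpa using (LipschitzWith.const z).add (lipschitzWith_rtr hε.1.le)
  obtain ⟨Mg, hMg⟩ := hbH.exists_norm_sub_le_comp_rtr hα₀ hε.1.le z
  have hgH : HolderFin α g := (hbH.comp_lipschitzWith hα₀ hφ).sub_const (b z)
  have hgL : LittleHolder α g := (hbl.comp_lipschitzWith hα₀ hφ).sub_const (b z)
  set F : ℝ → ℂ := fun t => Xc t * g t
  have hbze : bze X b z ε = periodize F z := rfl
  have hF_supp : ∀ t, 1 ≤ |t| → F t = 0 := fun t ht => by simp [F, Xc, hXsupp t ht]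
  have hMF : ∀ t, ‖F t‖ ≤ MX * Mg := fun t => by
    simpa only [F, norm_mul] using
      mul_le_mul (hMX t) (hMg t) (norm_nonneg _) ((norm_nonneg _).trans (hMX t))
  rw [hbze]
  exact ⟨per_periodize F z,
    (HolderFin.mul hα₀ (hXc_lip.holderFin hα₀ hα₁.le hMX) hgH hMX hMg).periodize hα₀ hF_supp hMF z,
    (LittleHolder.mul hα₀ (hXc_lip.littleHolder hα₀ hα₁) hgL hMX hMg).periodize hα₀ hF_supp z⟩

/-- If `b` is `2π`-periodic, α-Hölder and little-Hölder-α, then so is the localized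
coefficient `b_{z,ε}`. -/
theorem localized_coefficient_littleHolder
    (α ε z : ℝ) (hα : α ∈ Set.Ioo (0 : ℝ) 1) (hε : ε ∈ Set.Ioo (0 : ℝ) (1 / 2))
    (X : ℝ → ℝ) (hX : ContDiff ℝ 1 X) (hXsupp : ∀ x : ℝ, 1 ≤ |x| → X x = 0)
    (b : ℝ → ℂ) (hb : Per b) (hbH : HolderFin α b) (hbl : LittleHolder α b) :
    Per (bze X b z ε) ∧ HolderFin α (bze X b z ε) ∧ LittleHolder α (bze X b z ε) :=
  localized_coefficient_littleHolder_general α ε z hα hε X hX hXsupp b hbH hbl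
end
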